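/- arXiv:1501.02501 — 2 statements merged into one kernel-verified Lean document; each statement's English description precedes it below -/
import Mathlib

section
/- Let H be a real Hilbert space and let f, g : H → ℝ ∪ {+∞} satisfy: f, g proper, lower semicontinuous, convex, dom g ⊆ dom f, f Fréchet differentiable on an open set containing dom g, and ∇f uniformly continuous on bounded subsets of dom g and mapping bounded subsets of dom g to bounded sets. Fix σ > 0, θ ∈ (0,1), δ ∈ (0, 1/2) and x ∈ dom g. Then there exists a nonnegative integer n such that, with α = σθⁿ, one has α·‖∇f(J(x,α)) − ∇f(x)‖ ≤ δ·‖J(x,α) − x‖; i.e., the backtracking linesearch that starts at α = σ and multiplies α by θ while α‖∇f(J(x,α)) − ∇f(x)‖ > δ‖J(x,α) − x‖ terminates after finitely many steps. -/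
set_option linter.unusedSectionVars false


open Set Filter Topology Bornology RealInnerProductSpace

noncomputable section

variable {H : Type*} [NormedAddCommGroup H] [InnerProductSpace ℝ H] [CompleteSpace H]

/-- The effective domain of an extended-real-valued function. -/
def edom (h : H → EReal) : Set H := {x | h x < ⊤}

/-- `h` is a proper, lower semicontinuous, convex extended-real-valued function. -/
def ProperLscConvex (h : H → EReal) : Prop :=
  (∃ x, h x < ⊤) ∧ (∀ x, ⊥ < h x) ∧ LowerSemicontinuous h ∧
    ∀ x y : H, ∀ a b : ℝ, 0 ≤ a → 0 ≤ b → a + b = 1 →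
      h (a • x + b • y) ≤ (a : EReal) * h x + (b : EReal) * h y

/-- `p` is the proximal point `prox_{αg}(z)`, i.e. a minimizer of
`y ↦ g(y) + (1/(2α))‖y - z‖²` (such a minimizer is automatically unique). -/
def IsProxPt (g : H → EReal) (α : ℝ) (z p : H) : Prop :=
  ∀ y : H, g p + (((1 / (2 * α)) * ‖p - z‖ ^ 2 : ℝ) : EReal)
    ≤ g y + (((1 / (2 * α)) * ‖y - z‖ ^ 2 : ℝ) : EReal)

/-- `f` is Fréchet differentiable, with gradient `f'`, on an open set containing `s`
(in particular `f` is finite there). -/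
def GradOnOpenSupset (f : H → EReal) (f' : H → H) (s : Set H) : Prop :=
  ∃ U : Set H, IsOpen U ∧ s ⊆ U ∧
    ∀ x ∈ U, f x ≠ ⊤ ∧ HasGradientAt (fun y => (f y).toReal) (f' x) x

/-- Second half of Assumption A2: `f'` is uniformly continuous on bounded subsets of
`dom g` and maps bounded subsets of `dom g` to bounded sets. -/
def UCBddOnBounded (g : H → EReal) (f' : H → H) : Prop :=
  ∀ A : Set H, A ⊆ edom g → IsBounded A →
    UniformContinuousOn f' A ∧ IsBounded (f' '' A)

/-- The Linesearch-1 acceptance inequality at the point `x` with stepsize `α`. -/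
def LS1 (f' : H → H) (J : H → ℝ → H) (δ : ℝ) (x : H) (α : ℝ) : Prop :=
  α * ‖f' (J x α) - f' x‖ ≤ δ * ‖J x α - x‖

/-- `α` is the output of Linesearch 1 at `x`: the largest element of
`{σ, σθ, σθ², …}` satisfying the acceptance inequality. -/
def LS1Step (f' : H → H) (J : H → ℝ → H) (δ σ θ : ℝ) (x : H) (α : ℝ) : Prop :=
  ∃ n : ℕ, α = σ * θ ^ n ∧ LS1 f' J δ x α ∧
    ∀ m : ℕ, m < n → ¬ LS1 f' J δ x (σ * θ ^ m)

/-- The set of minimizers `S⁎` of `f + g` over `H`. -/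
def argminSet (f g : H → EReal) : Set H := {x | ∀ y, f x + g x ≤ f y + g y}

/-- The Linesearch-2 acceptance inequality at `x` (with `Jx = prox_g(x - ∇f(x))`)
with stepsize `β`. -/
def LS2Ineq (f g : H → EReal) (f' : H → H) (x Jx : H) (β : ℝ) : Prop :=
  f (x - β • (x - Jx)) + g (x - β • (x - Jx)) ≤
    f x + g x - (β : EReal) * (g x - g Jx)
      - ((β * ⟪f' x, x - Jx⟫ : ℝ) : EReal) + (((β / 2) * ‖x - Jx‖ ^ 2 : ℝ) : EReal)

/-- `v` belongs to the convex subdifferential `∂h(y)`. -/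
def InSubdiff (h : H → EReal) (y v : H) : Prop :=
  ∀ z : H, ((⟪v, z - y⟫ : ℝ) : EReal) ≤ h z - h y

/-- `h` is strongly convex with modulus `μ`. -/
def StrongConvexWith (h : H → EReal) (μ : ℝ) : Prop :=
  ∀ x y v : H, InSubdiff h y v →
    h y + ((⟪v, x - y⟫ : ℝ) : EReal) + (((μ / 2) * ‖x - y‖ ^ 2 : ℝ) : EReal) ≤ h x

lemma aux_coe {g : H → EReal} (hg : ProperLscConvex g) {y : H} (hy : y ∈ edom g) :
    g y = (((g y).toReal : ℝ) : EReal) := (EReal.coe_toReal hy.ne (hg.2.1 y).ne').symm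

lemma prox_mem_edom {g : H → EReal} (hg : ProperLscConvex g) {α : ℝ} {z p : H}
    (hp : IsProxPt g α z p) {y : H} (hy : y ∈ edom g) : p ∈ edom g := by
  have h := hp y
  by_contra htop
  simp only [edom, mem_setOf_eq, not_lt, top_le_iff] at htop
  have hlt : g y + (((1 / (2 * α)) * ‖y - z‖ ^ 2 : ℝ) : EReal) < ⊤ :=
    EReal.add_lt_top hy.ne (EReal.coe_ne_top _)
  rw [htop, EReal.top_add_of_ne_bot (EReal.coe_ne_bot _)] at h
  exact absurd (top_le_iff.mp h) hlt.ne

lemma prox_real' {g : H → EReal} (hg : ProperLscConvex g) {α : ℝ} (hα : 0 < α) {z p : H}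
    (hp : IsProxPt g α z p) (hpd : p ∈ edom g) {y : H} (hy : y ∈ edom g) :
    2 * α * (g p).toReal + ‖p - z‖ ^ 2 ≤ 2 * α * (g y).toReal + ‖y - z‖ ^ 2 := by
  have h := hp y
  rw [aux_coe hg hpd, aux_coe hg hy, ← EReal.coe_add, ← EReal.coe_add] at h
  have h' : (g p).toReal + 1 / (2 * α) * ‖p - z‖ ^ 2
      ≤ (g y).toReal + 1 / (2 * α) * ‖y - z‖ ^ 2 := by exact_mod_cast h
  have e : ∀ q : ℝ, 2 * α * (1 / (2 * α) * q) = q := fun q => by field_simp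
  have h'' := mul_le_mul_of_nonneg_left h' (by positivity : (0:ℝ) ≤ 2 * α)
  rw [mul_add, mul_add, e, e] at h''
  exact h''

lemma conv_mem_edom {g : H → EReal} (hg : ProperLscConvex g) {u p : H}
    (hu : u ∈ edom g) (hp : p ∈ edom g) {s : ℝ} (hs0 : 0 ≤ s) (hs1 : s ≤ 1) :
    s • u + (1 - s) • p ∈ edom g ∧
      (g (s • u + (1 - s) • p)).toReal ≤ s * (g u).toReal + (1 - s) * (g p).toReal := by
  have h := hg.2.2.2 u p s (1 - s) hs0 (by linarith) (by ring)
  rw [aux_coe hg hu, aux_coe hg hp, ← EReal.coe_mul, ← EReal.coe_mul, ← EReal.coe_add] at h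
  have hmem : s • u + (1 - s) • p ∈ edom g :=
    lt_of_le_of_lt h (EReal.coe_lt_top _)
  refine ⟨hmem, ?_⟩
  rw [aux_coe hg hmem] at h
  exact_mod_cast h

lemma prox_subgrad {g : H → EReal} (hg : ProperLscConvex g) {α : ℝ} (hα : 0 < α)
    {z p : H} (hp : IsProxPt g α z p) (hpd : p ∈ edom g) {u : H} (hu : u ∈ edom g) :
    ⟪z - p, u - p⟫ ≤ α * ((g u).toReal - (g p).toReal) := by
  set Gp := (g p).toReal
  set Gu := (g u).toReal
  set I := (⟪p - z, u - p⟫ : ℝ) with hI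
  set Q := ‖u - p‖ ^ 2 with hQ
  have hQ0 : 0 ≤ Q := by positivity
  have key : ∀ s : ℝ, 0 < s → s ≤ 1 → 2 * α * Gp - 2 * α * Gu - 2 * I ≤ s * Q := by
    intro s hs0 hs1
    obtain ⟨hmem, hconv⟩ := conv_mem_edom hg hu hpd hs0.le hs1
    have hprox := prox_real' hg hα hp hpd hmem
    have hexp : ‖s • u + (1 - s) • p - z‖ ^ 2
        = ‖p - z‖ ^ 2 + 2 * s * I + s ^ 2 * Q := by
      have he : s • u + (1 - s) • p - z = (p - z) + s • (u - p) := by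
        rw [sub_smul, one_smul, smul_sub]; abel
      rw [he, norm_add_sq_real, real_inner_smul_right, norm_smul, mul_pow,
        Real.norm_eq_abs, sq_abs]
      ring
    rw [hexp] at hprox
    -- hprox : 2α Gp + ‖p-z‖² ≤ 2α G(ys) + ‖p-z‖² + 2sI + s²Q
    -- hconv : G(ys) ≤ s Gu + (1-s) Gp
    have h2 : s * (2 * α * Gp) ≤ s * (2 * α * Gu + 2 * I + s * Q) := by nlinarith
    have h3 := le_of_mul_le_mul_left h2 hs0
    linarith
  have hfin : 2 * α * Gp - 2 * α * Gu - 2 * I ≤ 0 := by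
    by_contra hL
    push_neg at hL
    set L := 2 * α * Gp - 2 * α * Gu - 2 * I
    have hs : 0 < min 1 (L / (2 * Q + 1)) := by
      apply lt_min one_pos
      positivity
    have hk := key _ hs (min_le_left _ _)
    have : min 1 (L / (2 * Q + 1)) * Q ≤ (L / (2 * Q + 1)) * Q :=
      mul_le_mul_of_nonneg_right (min_le_right _ _) hQ0
    have hlt : (L / (2 * Q + 1)) * Q < L := by
      rw [div_mul_eq_mul_div, div_lt_iff₀ (by positivity)]
      nlinarith
    linarith
  have : (⟪z - p, u - p⟫ : ℝ) = -I := by rw [hI, ← inner_neg_left, neg_sub]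
  rw [this]
  linarith

set_option maxHeartbeats 1000000 in
lemma two_step {g : H → EReal} (hg : ProperLscConvex g) {f'x : H} {x p q : H} {α σ : ℝ}
    (hα : 0 < α) (hσ : 0 < σ) (hασ : α ≤ σ)
    (hp : IsProxPt g α (x - α • f'x) p) (hq : IsProxPt g σ (x - σ • f'x) q)
    (hpd : p ∈ edom g) (hqd : q ∈ edom g) (hxd : x ∈ edom g) :
    ‖x - p‖ ≤ ‖x - q‖ ∧ α * ‖x - q‖ ≤ σ * ‖x - p‖ ∧
      σ * ‖x - p‖ ^ 2 ≤ α * (σ * ((g x).toReal - (g q).toReal) + ‖x - q‖ ^ 2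
        + 3 * (σ * (‖f'x‖ * ‖x - q‖))) := by
  have h1 := prox_subgrad hg hα hp hpd hqd
  have h2 := prox_subgrad hg hσ hq hqd hpd
  have h3 := prox_subgrad hg hα hp hpd hxd
  set a := x - p with ha
  set b := x - q with hb
  have e1 : x - α • f'x - p = a - α • f'x := by rw [ha]; abel
  have e2 : q - p = a - b := by rw [ha, hb]; abel
  have e3 : x - σ • f'x - q = b - σ • f'x := by rw [hb]; abel
  have e4 : p - q = b - a := by rw [ha, hb]; abel
  rw [e1, e2] at h1
  rw [e3, e4] at h2
  rw [e1] at h3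
  have hFa := abs_le.mp (abs_real_inner_le_norm f'x a)
  have hFb := abs_le.mp (abs_real_inner_le_norm f'x b)
  have hICS := real_inner_le_norm a b
  have exp1 : (⟪a - α • f'x, a - b⟫ : ℝ)
      = ‖a‖ ^ 2 - ⟪a, b⟫ - α * ⟪f'x, a⟫ + α * ⟪f'x, b⟫ := by
    simp only [inner_sub_left, inner_sub_right, real_inner_smul_left,
      real_inner_self_eq_norm_sq]
    ring
  have exp2 : (⟪b - σ • f'x, b - a⟫ : ℝ)
      = ‖b‖ ^ 2 - ⟪a, b⟫ - σ * ⟪f'x, b⟫ + σ * ⟪f'x, a⟫ := by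
    simp only [inner_sub_left, inner_sub_right, real_inner_smul_left,
      real_inner_self_eq_norm_sq, real_inner_comm b a]
    ring
  have exp3 : (⟪a - α • f'x, a⟫ : ℝ) = ‖a‖ ^ 2 - α * ⟪f'x, a⟫ := by
    simp only [inner_sub_left, real_inner_smul_left, real_inner_self_eq_norm_sq]
  rw [exp1] at h1
  rw [exp2] at h2
  rw [exp3] at h3
  have ha0 : (0:ℝ) ≤ ‖a‖ := norm_nonneg a
  have hb0 : (0:ℝ) ≤ ‖b‖ := norm_nonneg b
  have hFx0 : (0:ℝ) ≤ ‖f'x‖ := norm_nonneg f'x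
  have h1' := mul_le_mul_of_nonneg_left h1 hσ.le
  have h2' := mul_le_mul_of_nonneg_left h2 hα.le
  have hABmul := mul_le_mul_of_nonneg_left hICS (by positivity : (0:ℝ) ≤ σ + α)
  have hAB : σ * ‖a‖ ^ 2 + α * ‖b‖ ^ 2 ≤ (σ + α) * (‖a‖ * ‖b‖) := by
    linarith [h1', h2', hABmul]
  have hmono : ‖a‖ ≤ ‖b‖ := by
    by_contra hlt
    push_neg at hlt
    have h5 : (‖a‖ - ‖b‖) * (σ * ‖a‖ - α * ‖b‖) ≤ 0 := by nlinarith [hAB]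
    have h6 : 0 < σ * ‖a‖ - α * ‖b‖ := by
      nlinarith [mul_le_mul_of_nonneg_right hασ hb0, mul_pos hσ (sub_pos.mpr hlt)]
    nlinarith [mul_pos (sub_pos.mpr hlt) h6]
  have hratio : α * ‖b‖ ≤ σ * ‖a‖ := by
    rcases eq_or_lt_of_le hmono with heq | hlt
    · rw [heq]
      nlinarith [mul_le_mul_of_nonneg_right hασ hb0]
    · by_contra h6
      push_neg at h6
      have h5 : (‖a‖ - ‖b‖) * (σ * ‖a‖ - α * ‖b‖) ≤ 0 := by nlinarith [hAB]
      nlinarith [mul_pos (sub_pos.mpr hlt) (sub_pos.mpr h6)]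
  have h3' := mul_le_mul_of_nonneg_left h3 hσ.le
  refine ⟨hmono, hratio, ?_⟩
  nlinarith [h3', h2', mul_le_mul_of_nonneg_left hICS hα.le,
    mul_le_mul_of_nonneg_left (mul_le_mul_of_nonneg_right hmono hb0) hα.le,
    mul_le_mul_of_nonneg_left hFb.2 (mul_nonneg hα.le hσ.le),
    mul_nonneg hα.le (mul_nonneg (mul_nonneg hσ.le hFx0) hb0),
    mul_nonneg hα.le (sq_nonneg ‖b‖)]
/-- Lemma 3.1: under Assumptions A1–A2, Linesearch 1 terminates after
finitely many steps: some `α = σθⁿ` satisfies the acceptance inequality. -/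
theorem stmt2
    (f g : H → EReal) (f' : H → H) (prox : ℝ → H → H)
    (hf : ProperLscConvex f) (hg : ProperLscConvex g)
    (hdom : edom g ⊆ edom f)
    (hdiff : GradOnOpenSupset f f' (edom g))
    (hA2 : UCBddOnBounded g f')
    (hprox : ∀ α : ℝ, 0 < α → ∀ z : H, IsProxPt g α z (prox α z))
    (J : H → ℝ → H) (hJ : ∀ (x : H) (α : ℝ), J x α = prox α (x - α • f' x))
    (σ θ δ : ℝ) (hσ : 0 < σ) (hθ : θ ∈ Set.Ioo (0 : ℝ) 1)
    (hδ : δ ∈ Set.Ioo (0 : ℝ) (1 / 2))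
    (x : H) (hx : x ∈ edom g) :
    ∃ n : ℕ, LS1 f' J δ x (σ * θ ^ n) := by

  obtain ⟨hθ0, hθ1⟩ := hθ
  obtain ⟨hδ0, -⟩ := hδ
  have hproxq : IsProxPt g σ (x - σ • f' x) (J x σ) := by
    rw [hJ]; exact hprox σ hσ _
  have hqd : J x σ ∈ edom g := prox_mem_edom hg hproxq hx
  by_cases hcase : J x σ = x
  · refine ⟨0, ?_⟩
    simp only [LS1, pow_zero, mul_one, hcase]
    simp
  · have hB : 0 < ‖x - J x σ‖ :=
      norm_pos_iff.mpr (sub_ne_zero.mpr fun h => hcase h.symm)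
    have hFx0 : (0:ℝ) ≤ ‖f' x‖ := norm_nonneg _
    set D : ℝ := σ * ((g x).toReal - (g (J x σ)).toReal) + ‖x - J x σ‖ ^ 2
        + 3 * (σ * (‖f' x‖ * ‖x - J x σ‖)) with hD
    set C : ℝ := max (D / σ) 1 with hC
    have hC1 : (1:ℝ) ≤ C := le_max_right _ _
    have hC0 : (0:ℝ) < C := lt_of_lt_of_le one_pos hC1
    have hSsub : edom g ∩ Metric.closedBall x ‖x - J x σ‖ ⊆ edom g := inter_subset_left
    have hUC := (hA2 _ hSsub (Metric.isBounded_closedBall.subset inter_subset_right)).1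
    rw [Metric.uniformContinuousOn_iff] at hUC
    obtain ⟨r, hr0, hr⟩ := hUC (δ * ‖x - J x σ‖ / σ) (by positivity)
    obtain ⟨n, hn⟩ := exists_pow_lt_of_lt_one
      (show (0:ℝ) < min (r ^ 2 / (σ * C)) 1 by positivity) hθ1
    refine ⟨n, ?_⟩
    have hθn0 : (0:ℝ) < θ ^ n := pow_pos hθ0 n
    have hα0 : 0 < σ * θ ^ n := mul_pos hσ hθn0
    have hθn1 : θ ^ n ≤ 1 := pow_le_one₀ hθ0.le hθ1.le
    have hασ : σ * θ ^ n ≤ σ := by nlinarith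
    have hproxα : IsProxPt g (σ * θ ^ n) (x - (σ * θ ^ n) • f' x) (J x (σ * θ ^ n)) := by
      rw [hJ]; exact hprox _ hα0 _
    have hpd : J x (σ * θ ^ n) ∈ edom g := prox_mem_edom hg hproxα hx
    obtain ⟨hmono, hratio, hfinal⟩ :=
      two_step hg hα0 hσ hασ hproxα hproxq hpd hqd hx
    rw [← hD] at hfinal
    have hDC : D ≤ σ * C := by
      calc D = σ * (D / σ) := by field_simp
      _ ≤ σ * C := mul_le_mul_of_nonneg_left (le_max_left _ _) hσ.le
    have hsq : ‖x - J x (σ * θ ^ n)‖ ^ 2 ≤ (σ * θ ^ n) * C := by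
      have h6 := mul_le_mul_of_nonneg_left hDC hα0.le
      refine le_of_mul_le_mul_left ?_ hσ
      calc σ * ‖x - J x (σ * θ ^ n)‖ ^ 2 ≤ (σ * θ ^ n) * D := hfinal
      _ ≤ (σ * θ ^ n) * (σ * C) := h6
      _ = σ * ((σ * θ ^ n) * C) := by ring
    have h7 : (σ * θ ^ n) * C < r ^ 2 := by
      have h8 := (lt_div_iff₀ (by positivity : (0:ℝ) < σ * C)).mp
        (lt_of_lt_of_le hn (min_le_left _ _))
      nlinarith
    have hlt : ‖x - J x (σ * θ ^ n)‖ < r := by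
      nlinarith [hsq, h7, hr0, norm_nonneg (x - J x (σ * θ ^ n))]
    have hxS : x ∈ edom g ∩ Metric.closedBall x ‖x - J x σ‖ :=
      ⟨hx, Metric.mem_closedBall_self hB.le⟩
    have hpS : J x (σ * θ ^ n) ∈ edom g ∩ Metric.closedBall x ‖x - J x σ‖ := by
      refine ⟨hpd, Metric.mem_closedBall.mpr ?_⟩
      rw [dist_eq_norm, norm_sub_rev]
      exact hmono
    have h9 := hr _ hpS x hxS (by rw [dist_eq_norm, norm_sub_rev]; exact hlt)
    rw [dist_eq_norm] at h9
    simp only [LS1]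
    rw [norm_sub_rev (J x (σ * θ ^ n)) x]
    have h10 := mul_le_mul_of_nonneg_left h9.le hα0.le
    have h11 := mul_le_mul_of_nonneg_left hratio (div_nonneg hδ0.le hσ.le)
    have e5 : δ / σ * (σ * ‖x - J x (σ * θ ^ n)‖) = δ * ‖x - J x (σ * θ ^ n)‖ := by
      field_simp
    have e6 : (σ * θ ^ n) * (δ * ‖x - J x σ‖ / σ) = δ / σ * ((σ * θ ^ n) * ‖x - J x σ‖) := by
      ring
    linarith [h10, h11, e5.le, e5.ge, e6.le, e6.ge]
end
end

section
/- Let H be a real Hilbert space, f, g : H → ℝ ∪ {+∞} proper, lower semicontinuous, convex with dom g ⊆ dom f and f Fréchet differentiable on an open set containing dom g. Let δ ∈ (0, 1/2), let x^k ∈ dom g, α_k > 0, and x^{k+1} = J(x^k, α_k) = prox_{α_k g}(x^k − α_k ∇f(x^k)), and suppose the linesearch inequality α_k·‖∇f(x^{k+1}) − ∇f(x^k)‖ ≤ δ·‖x^{k+1} − x^k‖ holds. Then for every x ∈ dom g: ‖x^k − x‖² − ‖x^{k+1} − x‖² ≥ 2α_k[(f+g)(x^{k+1}) − (f+g)(x)]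 + (1 − 2δ)‖x^{k+1} − x^k‖². -/
open Set Filter Topology Bornology RealInnerProductSpace

noncomputable section

variable {H : Type*} [NormedAddCommGroup H] [InnerProductSpace ℝ H] [CompleteSpace H]

set_option linter.unusedSectionVars false

lemma grad_ineq {f : H → EReal} (hbot : ∀ x, ⊥ < f x)
    (hconv : ∀ x y : H, ∀ a b : ℝ, 0 ≤ a → 0 ≤ b → a + b = 1 →
      f (a • x + b • y) ≤ (a : EReal) * f x + (b : EReal) * f y)
    {x₀ v : H} (hx₀ : f x₀ ≠ ⊤)
    (hgrad : HasGradientAt (fun w => (f w).toReal) v x₀)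
    {y : H} (hy : f y ≠ ⊤) :
    (f x₀).toReal + ⟪v, y - x₀⟫ ≤ (f y).toReal := by
  set F : H → ℝ := fun w => (f w).toReal with hF
  set d := y - x₀ with hd
  have hline : HasDerivAt (fun t : ℝ => x₀ + t • d) d 0 := by
    simpa using ((hasDerivAt_id (0:ℝ)).smul_const d).const_add x₀
  have hφ : HasDerivAt (fun t : ℝ => F (x₀ + t • d)) ⟪v, d⟫ 0 := by
    have h1 : HasFDerivAt F ((InnerProductSpace.toDual ℝ H) v) (x₀ + (0:ℝ) • d) := by
      simpa using hgrad.hasFDerivAt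
    have h2 := h1.comp_hasDerivAt 0 hline
    simp at h2
    exact h2
  have key : ∀ t ∈ Set.Ioc (0:ℝ) 1,
      slope (fun t : ℝ => F (x₀ + t • d)) 0 t ≤ F y - F x₀ := by
    intro t ht
    have hpt : x₀ + t • d = (1 - t) • x₀ + t • y := by
      rw [hd]; module
    have hcv := hconv x₀ y (1 - t) t (by linarith [ht.2]) ht.1.le (by ring)
    rw [← hpt] at hcv
    rw [show f x₀ = ((F x₀ : ℝ) : EReal) from (EReal.coe_toReal hx₀ (hbot x₀).ne').symm,
        show f y = ((F y : ℝ) : EReal) from (EReal.coe_toReal hy (hbot y).ne').symm] at hcv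
    have hcv2 : f (x₀ + t • d) ≤ (((1 - t) * F x₀ + t * F y : ℝ) : EReal) := by
      refine hcv.trans_eq ?_
      norm_cast
    have hreal : F (x₀ + t • d) ≤ (1 - t) * F x₀ + t * F y := by
      have := EReal.toReal_le_toReal hcv2 (hbot _).ne' (EReal.coe_ne_top _)
      rwa [EReal.toReal_coe] at this
    have hφ0 : F (x₀ + (0:ℝ) • d) = F x₀ := by simp
    rw [slope_def_field, hφ0, sub_zero, div_le_iff₀ ht.1]
    nlinarith [hreal]
  have htend : Tendsto (slope (fun t : ℝ => F (x₀ + t • d)) 0) (𝓝[>] (0:ℝ)) (𝓝 ⟪v, d⟫) :=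
    (hasDerivAt_iff_tendsto_slope.mp hφ).mono_left
      (nhdsWithin_mono _ (fun t ht => ne_of_gt ht))
  have hmem : Set.Ioc (0:ℝ) 1 ∈ 𝓝[>] (0:ℝ) :=
    Ioc_mem_nhdsGT_of_mem ⟨le_refl 0, one_pos⟩
  have hle : ⟪v, d⟫ ≤ F y - F x₀ :=
    le_of_tendsto htend (Filter.eventually_iff_exists_mem.mpr ⟨_, hmem, key⟩)
  linarith

lemma prox_subgrad_s4 {g : H → EReal} (hbot : ∀ x, ⊥ < g x)
    (hconv : ∀ x y : H, ∀ a b : ℝ, 0 ≤ a → 0 ≤ b → a + b = 1 →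
      g (a • x + b • y) ≤ (a : EReal) * g x + (b : EReal) * g y)
    {α : ℝ} (hα : 0 < α) {z p : H} (hp : IsProxPt g α z p) (hptop : g p ≠ ⊤)
    {y : H} (hy : g y ≠ ⊤) :
    (g p).toReal ≤ (g y).toReal + (1/α) * ⟪p - z, y - p⟫ := by
  set G : H → ℝ := fun w => (g w).toReal with hG
  set d := y - p with hd
  set c : ℝ := 1 / (2 * α) with hc
  have hc0 : 0 < c := by positivity
  have key : ∀ t : ℝ, 0 < t → t ≤ 1 →
      G p ≤ G y + (1/α) * ⟪p - z, d⟫ + c * t * ‖d‖ ^ 2 := by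
    intro t ht0 ht1
    have hpt : p + t • d = (1 - t) • p + t • y := by rw [hd]; module
    have hcv := hconv p y (1 - t) t (by linarith) ht0.le (by ring)
    rw [← hpt] at hcv
    rw [show g p = ((G p : ℝ) : EReal) from (EReal.coe_toReal hptop (hbot p).ne').symm,
        show g y = ((G y : ℝ) : EReal) from (EReal.coe_toReal hy (hbot y).ne').symm] at hcv
    have hcv2 : g (p + t • d) ≤ (((1 - t) * G p + t * G y : ℝ) : EReal) :=
      hcv.trans_eq (by norm_cast)
    have hprox := hp (p + t • d)
    rw [show g p = ((G p : ℝ) : EReal) from (EReal.coe_toReal hptop (hbot p).ne').symm] at hprox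
    have hprox2 : ((G p + c * ‖p - z‖ ^ 2 : ℝ) : EReal)
        ≤ (((1 - t) * G p + t * G y + c * ‖p + t • d - z‖ ^ 2 : ℝ) : EReal) := by
      push_cast
      refine le_trans (le_of_eq ?_) (hprox.trans (add_le_add_left hcv2 _))
      norm_cast
    have hre : G p + c * ‖p - z‖ ^ 2
        ≤ (1 - t) * G p + t * G y + c * ‖p + t • d - z‖ ^ 2 := by
      exact_mod_cast hprox2
    have hexp : ‖p + t • d - z‖ ^ 2
        = ‖p - z‖ ^ 2 + 2 * (t * ⟪p - z, d⟫) + t ^ 2 * ‖d‖ ^ 2 := by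
      have : p + t • d - z = (p - z) + t • d := by abel
      rw [this, norm_add_sq_real, real_inner_smul_right, norm_smul]
      simp [mul_pow, abs_of_pos ht0]
    rw [hexp] at hre
    have h2c : 2 * c = 1 / α := by rw [hc]; field_simp
    have hre2 : t * G p ≤ t * G y + 2*c*t*⟪p - z, d⟫ + c*t^2*‖d‖^2 := by nlinarith [hre]
    have hre3 : t * G p ≤ t * (G y + (1/α) * ⟪p - z, d⟫ + c * t * ‖d‖ ^ 2) := by
      have he : t * (G y + (1/α) * ⟪p - z, d⟫ + c * t * ‖d‖ ^ 2)
          = t * G y + (t*(1/α))*⟪p - z, d⟫ + c*t^2*‖d‖^2 := by ring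
      rw [he, show t*(1/α) = 2*c*t by rw [← h2c]; ring]
      exact hre2
    exact le_of_mul_le_mul_left hre3 ht0
  refine le_of_forall_pos_le_add ?_
  intro ε hε
  set K := c * ‖d‖ ^ 2 with hK
  have hK0 : 0 ≤ K := by positivity
  have ht0 : 0 < min 1 (ε / (K + 1)) := lt_min one_pos (by positivity)
  have h := key _ ht0 (min_le_left _ _)
  have htle : min 1 (ε / (K + 1)) ≤ ε / (K + 1) := min_le_right _ _
  have : c * min 1 (ε / (K + 1)) * ‖d‖ ^ 2 ≤ ε := by
    have h1 : c * min 1 (ε / (K + 1)) * ‖d‖ ^ 2 = min 1 (ε / (K + 1)) * K := by rw [hK]; ring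
    rw [h1]
    have h2 : min 1 (ε / (K + 1)) * K ≤ (ε / (K + 1)) * K :=
      mul_le_mul_of_nonneg_right htle hK0
    refine h2.trans ?_
    rw [div_mul_eq_mul_div, div_le_iff₀ (by positivity)]
    nlinarith
  linarith

/-- Proposition 4.1(i): if `x⁺ = prox_{αg}(x⁰ − α∇f(x⁰))` and the
linesearch inequality holds, then for every `x ∈ dom g`,
`‖x⁰ − x‖² − ‖x⁺ − x‖² ≥ 2α[(f+g)(x⁺) − (f+g)(x)] + (1 − 2δ)‖x⁺ − x⁰‖²`. -/
theorem stmt4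
    (f g : H → EReal) (f' : H → H)
    (hf : ProperLscConvex f) (hg : ProperLscConvex g)
    (hdom : edom g ⊆ edom f)
    (hdiff : GradOnOpenSupset f f' (edom g))
    (δ : ℝ) (hδ : δ ∈ Set.Ioo (0 : ℝ) (1 / 2))
    (xk : H) (hxk : xk ∈ edom g) (αk : ℝ) (hαk : 0 < αk)
    (xk1 : H) (hxk1 : IsProxPt g αk (xk - αk • f' xk) xk1)
    (hls : αk * ‖f' xk1 - f' xk‖ ≤ δ * ‖xk1 - xk‖) :
    ∀ x ∈ edom g,
      ((2 * αk : ℝ) : EReal) * ((f xk1 + g xk1) - (f x + g x))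
          + (((1 - 2 * δ) * ‖xk1 - xk‖ ^ 2 : ℝ) : EReal)
        ≤ ((‖xk - x‖ ^ 2 - ‖xk1 - x‖ ^ 2 : ℝ) : EReal) := by
  intro x hx
  obtain ⟨U, hUopen, hsU, hU⟩ := hdiff
  have hfbot := hf.2.1
  have hgbot := hg.2.1
  have hfconv := hf.2.2.2
  have hgconv := hg.2.2.2
  -- xk1 ∈ dom g
  have hxk1top : g xk1 ≠ ⊤ := by
    intro h
    have h1 := hxk1 xk
    rw [h, EReal.top_add_coe] at h1
    exact absurd (h1.trans_lt (EReal.add_lt_top hxk.ne (EReal.coe_ne_top _))) (lt_irrefl _)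
  have hxk1mem : xk1 ∈ edom g := lt_top_iff_ne_top.mpr hxk1top
  -- finiteness of f
  have hfxk : f xk ≠ ⊤ := (hdom hxk).ne
  have hfxk1 : f xk1 ≠ ⊤ := (hdom hxk1mem).ne
  have hfx : f x ≠ ⊤ := (hdom hx).ne
  have hgx : g x ≠ ⊤ := hx.ne
  -- gradients
  have hgradk : HasGradientAt (fun w => (f w).toReal) (f' xk) xk := (hU xk (hsU hxk)).2
  have hgradk1 : HasGradientAt (fun w => (f w).toReal) (f' xk1) xk1 := (hU xk1 (hsU hxk1mem)).2
  set F : H → ℝ := fun w => (f w).toReal with hF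
  set G : H → ℝ := fun w => (g w).toReal with hG
  -- key real facts
  have hA : G xk1 ≤ G x + (1/αk) * ⟪xk1 - (xk - αk • f' xk), x - xk1⟫ :=
    prox_subgrad_s4 hgbot hgconv hαk hxk1 hxk1top hgx
  have hB : F xk + ⟪f' xk, x - xk⟫ ≤ F x := grad_ineq hfbot hfconv hfxk hgradk hfx
  have hC : F xk1 + ⟪f' xk1, xk - xk1⟫ ≤ F xk := grad_ineq hfbot hfconv hfxk1 hgradk1 hfxk
  set P : ℝ := ⟪xk1 - xk, x - xk1⟫ with hP
  set Q : ℝ := ⟪f' xk, x - xk1⟫ with hQ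
  set R : ℝ := ⟪f' xk, xk1 - xk⟫ with hR
  set S : ℝ := ⟪f' xk1 - f' xk, xk1 - xk⟫ with hS
  set n : ℝ := ‖xk1 - xk‖ with hn
  -- identities
  have idA : ⟪xk1 - (xk - αk • f' xk), x - xk1⟫ = P + αk * Q := by
    rw [show xk1 - (xk - αk • f' xk) = (xk1 - xk) + αk • f' xk by abel]
    rw [inner_add_left, real_inner_smul_left]
  have idB : ⟪f' xk, x - xk⟫ = Q + R := by
    rw [show x - xk = (x - xk1) + (xk1 - xk) by abel, inner_add_right]
  have idC : ⟪f' xk1, xk - xk1⟫ = -R - S := by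
    have h1 : ⟪f' xk1, xk - xk1⟫ = ⟪f' xk, xk - xk1⟫ + ⟪f' xk1 - f' xk, xk - xk1⟫ := by
      rw [inner_sub_left]; ring
    have h2 : ⟪f' xk, xk - xk1⟫ = -R := by
      rw [hR, show xk - xk1 = -(xk1 - xk) by abel, inner_neg_right]
    have h3 : ⟪f' xk1 - f' xk, xk - xk1⟫ = -S := by
      rw [hS, show xk - xk1 = -(xk1 - xk) by abel, inner_neg_right]
    rw [h1, h2, h3]; ring
  have hD1 : S ≤ ‖f' xk1 - f' xk‖ * n := real_inner_le_norm _ _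
  have hE : ‖xk - x‖ ^ 2 = n ^ 2 + 2 * P + ‖xk1 - x‖ ^ 2 := by
    have h1 : xk - x = (xk - xk1) + (xk1 - x) := by abel
    rw [h1, norm_add_sq_real]
    have h2 : ⟪xk - xk1, xk1 - x⟫ = P := by
      rw [hP, show xk - xk1 = -(xk1 - xk) by abel, show xk1 - x = -(x - xk1) by abel,
        inner_neg_neg]
    rw [h2, show ‖xk - xk1‖ = n by rw [hn, norm_sub_rev]]
  -- combine to real inequality
  have hn0 : (0:ℝ) ≤ n := norm_nonneg _
  have hN0 : (0:ℝ) ≤ ‖f' xk1 - f' xk‖ := norm_nonneg _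
  have hαS : αk * S ≤ δ * n ^ 2 := by
    nlinarith [mul_le_mul_of_nonneg_right hls hn0, mul_le_mul_of_nonneg_left hD1 hαk.le]
  have hmain : 2 * αk * ((F xk1 + G xk1) - (F x + G x)) + (1 - 2*δ) * n ^ 2
      ≤ ‖xk - x‖ ^ 2 - ‖xk1 - x‖ ^ 2 := by
    rw [idA] at hA
    rw [idB] at hB
    rw [idC] at hC
    have hA' : αk * G xk1 ≤ αk * G x + P + αk * Q := by
      have := mul_le_mul_of_nonneg_left hA hαk.le
      have he : αk * (G x + 1/αk * (P + αk * Q)) = αk * G x + P + αk * Q := by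
        field_simp; ring
      rw [he] at this
      linarith
    nlinarith [hE]
  -- lift to EReal
  rw [show f xk1 = ((F xk1 : ℝ) : EReal) from (EReal.coe_toReal hfxk1 (hfbot xk1).ne').symm,
      show f x = ((F x : ℝ) : EReal) from (EReal.coe_toReal hfx (hfbot x).ne').symm,
      show g xk1 = ((G xk1 : ℝ) : EReal) from (EReal.coe_toReal hxk1top (hgbot xk1).ne').symm,
      show g x = ((G x : ℝ) : EReal) from (EReal.coe_toReal hgx (hgbot x).ne').symm]
  have hcast : ((2 * αk : ℝ) : EReal) * (((F xk1 : ℝ) : EReal) + ((G xk1 : ℝ) : EReal)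
        - (((F x : ℝ) : EReal) + ((G x : ℝ) : EReal)))
      + (((1 - 2 * δ) * ‖xk1 - xk‖ ^ 2 : ℝ) : EReal)
      = ((2 * αk * ((F xk1 + G xk1) - (F x + G x)) + (1 - 2*δ) * ‖xk1 - xk‖ ^ 2 : ℝ) : EReal) := by
    norm_cast
  rw [hcast]
  exact_mod_cast hmain
end
end
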